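/- Let P and Q be probability distributions on a finite set 𝒳 with |𝒳| ≥ 2 and total variation distance ε := ‖P − Q‖_TV satisfying ε ≤ 1 − 1/|𝒳|. Then |H(P) − H(Q)| ≤ ε · log(|𝒳| − 1) + h₂(ε), where h₂(ε) = −ε log ε − (1 − ε) log(1 − ε). -/
import Mathlib


noncomputable section

open Finset

/-- `p` is a probability mass function on the finite type `X`. -/
def IsPMF {X : Type} [Fintype X] (p : X → ℝ) : Prop :=
  (∀ x, 0 ≤ p x) ∧ ∑ x, p x = 1

/-- Shannon entropy (natural logarithm); `Real.log 0 = 0` gives `0 log 0 = 0`. -/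
def ent {X : Type} [Fintype X] (p : X → ℝ) : ℝ :=
  -∑ x, p x * Real.log (p x)

/-- Kullback–Leibler divergence on a finite alphabet. -/
def KLdiv {X : Type} [Fintype X] (p q : X → ℝ) : ℝ :=
  ∑ x, p x * Real.log (p x / q x)

/-- Marginal on the first coordinate of a joint distribution. -/
def margFst {X Y : Type} [Fintype X] [Fintype Y] (p : X × Y → ℝ) : X → ℝ :=
  fun x => ∑ y, p (x, y)

/-- Conditional entropy `H(Y | X)` of a joint distribution on `X × Y`,
given by the identity `H(Y|X) = H(X,Y) - H(X)`. -/
def condEnt {X Y : Type} [Fintype X] [Fintype Y] (p : X × Y → ℝ) : ℝ :=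
  ent p - ent (margFst p)

/-- Conditional mutual information `I(Y ; Z ∣ X)` of a joint distribution on
`X × Y × Z`, in log-ratio form. -/
def cmi {X Y Z : Type} [Fintype X] [Fintype Y] [Fintype Z] (p : X × Y × Z → ℝ) : ℝ :=
  ∑ x, ∑ y, ∑ z, p (x, y, z) *
    Real.log ((p (x, y, z) * (∑ y', ∑ z', p (x, y', z'))) /
      ((∑ z', p (x, y, z')) * (∑ y', p (x, y', z))))

/-- The length-`k` prefix of a sequence of `K` reasoning tokens. -/
def pfx {C : Type} {K : ℕ} (k : ℕ) (h : k ≤ K) (c : Fin K → C) : Fin k → C :=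
  fun t => c (Fin.castLE h t)

/-- The joint distribution of `(Q, C_{1:k}, A)` obtained by marginalizing the
joint distribution of `(Q, C_{1:K}, A)` over the suffix `C_{k+1:K}`. -/
def prefJoint {Q C A : Type} [Fintype Q] [Fintype C] [Fintype A] [DecidableEq C]
    {K : ℕ} (p : Q × (Fin K → C) × A → ℝ) (k : ℕ) (h : k ≤ K) :
    (Q × (Fin k → C)) × A → ℝ :=
  fun z => ∑ c : Fin K → C, if pfx k h c = z.1.2 then p (z.1.1, c, z.2) else 0

/-- `H(A ∣ Q, C_{1:k})`, the conditional answer entropy at prefix length `k`.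
For `k = 0` this is `H(A ∣ Q)`. -/
def condAnsEnt {Q C A : Type} [Fintype Q] [Fintype C] [Fintype A] [DecidableEq C]
    {K : ℕ} (p : Q × (Fin K → C) × A → ℝ) (k : ℕ) (h : k ≤ K) : ℝ :=
  condEnt (prefJoint p k h)

/-- The joint distribution of `((Q, C_{1:t}), C_{t+1}, A)`, separating token `t+1`
from the earlier prefix. -/
def stepJoint {Q C A : Type} [Fintype Q] [Fintype C] [Fintype A] [DecidableEq C]
    {K : ℕ} (p : Q × (Fin K → C) × A → ℝ) (t : ℕ) (h : t + 1 ≤ K) :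
    (Q × (Fin t → C)) × C × A → ℝ :=
  fun z => prefJoint p (t + 1) h ((z.1.1, Fin.snoc z.1.2 z.2.1), z.2.2)

/-- The joint distribution of `(Q, C_{1:k}, A)` reshaped as a triple, so that
`cmi` computes `I(A ; C_{1:k} ∣ Q)`. -/
def prefTriple {Q C A : Type} [Fintype Q] [Fintype C] [Fintype A] [DecidableEq C]
    {K : ℕ} (p : Q × (Fin K → C) × A → ℝ) (k : ℕ) (h : k ≤ K) :
    Q × (Fin k → C) × A → ℝ :=
  fun z => prefJoint p k h ((z.1, z.2.1), z.2.2)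

/-- Model conditional probability `p(a ∣ q, c_{1:k})`. -/
def condProbA {Q C A : Type} [Fintype Q] [Fintype C] [Fintype A] [DecidableEq C]
    {K : ℕ} (p : Q × (Fin K → C) × A → ℝ) (k : ℕ) (h : k ≤ K)
    (q : Q) (cp : Fin k → C) (a : A) : ℝ :=
  prefJoint p k h ((q, cp), a) / margFst (prefJoint p k h) (q, cp)

/-- Binary entropy function. -/
def h2 (e : ℝ) : ℝ := -e * Real.log e - (1 - e) * Real.log (1 - e)

/-- Total variation distance on a finite alphabet. -/
def tv {X : Type} [Fintype X] (p q : X → ℝ) : ℝ :=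
  (1 / 2) * ∑ x, |p x - q x|

lemma finlt {k K : ℕ} (hkK : k ≤ K) (t : Fin k) : t.1 + 1 ≤ K :=
  Nat.succ_le_of_lt (lt_of_lt_of_le t.2 hkK)

lemma ent_eq {X : Type} [Fintype X] (w : X → ℝ) :
    ent w = ∑ x, Real.negMulLog (w x) := by
  simp only [ent, Real.negMulLog, neg_mul, Finset.sum_neg_distrib]

lemma ent_nonneg' {X : Type} [Fintype X] (w : X → ℝ)
    (h0 : ∀ x, 0 ≤ w x) (h1 : ∑ x, w x = 1) : 0 ≤ ent w := by
  rw [ent_eq]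
  refine Finset.sum_nonneg fun x _ => Real.negMulLog_nonneg (h0 x) ?_
  have := Finset.single_le_sum (f := w) (fun i _ => h0 i) (Finset.mem_univ x)
  linarith [h1 ▸ this]

lemma negMulLog_add_le {a b : ℝ} (ha : 0 ≤ a) (hb : 0 ≤ b) :
    Real.negMulLog (a + b) ≤ Real.negMulLog a + Real.negMulLog b := by
  have key : ∀ x y : ℝ, 0 ≤ x → 0 ≤ y →
      -(x * Real.log (x + y)) ≤ Real.negMulLog x := by
    intro x y hx hy
    rcases eq_or_lt_of_le hx with h | h
    · simp [← h, Real.negMulLog]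
    · have hlog : Real.log x ≤ Real.log (x + y) := Real.log_le_log h (by linarith)
      have := mul_le_mul_of_nonneg_left hlog h.le
      simp only [Real.negMulLog, neg_mul]
      linarith
  have k1 := key a b ha hb
  have k2 := key b a hb ha
  rw [add_comm b a] at k2
  have hexp : Real.negMulLog (a + b)
      = -(a * Real.log (a + b)) + -(b * Real.log (a + b)) := by
    simp only [Real.negMulLog, neg_mul]; ring
  rw [hexp]
  linarith

lemma ent_le_log_card' {X : Type} [Fintype X] (w : X → ℝ) (s : Finset X)
    (hpos : ∀ x ∈ s, 0 < w x) (hz : ∀ x ∉ s, w x = 0)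
    (h1 : ∑ x ∈ s, w x = 1) : ent w ≤ Real.log s.card := by
  rw [ent_eq]
  have hres : ∑ x, Real.negMulLog (w x) = ∑ x ∈ s, Real.negMulLog (w x) :=
    (Finset.sum_subset (Finset.subset_univ s)
      (fun x _ hx => by rw [hz x hx]; simp)).symm
  rw [hres]
  have jensen := (strictConcaveOn_log_Ioi.concaveOn).le_map_sum
    (t := s) (w := w) (p := fun x => (w x)⁻¹)
    (fun i hi => (hpos i hi).le) h1
    (fun i hi => Set.mem_Ioi.2 (inv_pos.2 (hpos i hi)))
  simp only [smul_eq_mul] at jensen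
  have hL : ∑ x ∈ s, Real.negMulLog (w x)
      = ∑ x ∈ s, w x * Real.log (w x)⁻¹ := by
    refine Finset.sum_congr rfl fun x hx => ?_
    rw [Real.log_inv, Real.negMulLog]; ring
  have hR : ∑ x ∈ s, w x * (w x)⁻¹ = (s.card : ℝ) := by
    rw [Finset.sum_congr rfl fun x hx => mul_inv_cancel₀ (hpos x hx).ne']
    simp
  rw [hL]
  calc ∑ x ∈ s, w x * Real.log (w x)⁻¹
      ≤ Real.log (∑ x ∈ s, w x * (w x)⁻¹) := jensen
    _ = Real.log s.card := by rw [hR]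

lemma one_side {X : Type} [Fintype X] (P Q : X → ℝ) (hP : IsPMF P) (hQ : IsPMF Q)
    (hX : 2 ≤ Fintype.card X)
    (hε : tv P Q ≤ 1 - 1 / (Fintype.card X : ℝ)) :
    ent P - ent Q
      ≤ tv P Q * Real.log ((Fintype.card X : ℝ) - 1) + h2 (tv P Q) := by
  classical
  obtain ⟨hP0, hP1⟩ := hP
  obtain ⟨hQ0, hQ1⟩ := hQ
  have hcard2 : (2 : ℝ) ≤ (Fintype.card X : ℝ) := by exact_mod_cast hX
  have hcardpos : (0 : ℝ) < (Fintype.card X : ℝ) := by linarith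
  set ε := tv P Q with hεdef
  have hε0 : 0 ≤ ε := by
    rw [hεdef]; unfold tv
    have : 0 ≤ ∑ x, |P x - Q x| :=
      Finset.sum_nonneg fun x _ => abs_nonneg _
    linarith
  have habs : ∑ x, |P x - Q x| = 2 * ε := by
    rw [hεdef]; unfold tv; ring
  have hsum0 : ∑ x, (P x - Q x) = 0 := by
    rw [Finset.sum_sub_distrib, hP1, hQ1]; ring
  have hmax : ∀ a : ℝ, max a 0 = (a + |a|) / 2 := by
    intro a
    rcases le_total a 0 with h | h
    · rw [max_eq_right h, abs_of_nonpos h]; ring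
    · rw [max_eq_left h, abs_of_nonneg h]; ring
  have ha_sum : ∑ x, max (P x - Q x) 0 = ε := by
    rw [Finset.sum_congr rfl (fun x _ => hmax (P x - Q x)), ← Finset.sum_div,
      Finset.sum_add_distrib, hsum0, habs]
    ring
  have hb_sum : ∑ x, max (Q x - P x) 0 = ε := by
    have h1 : ∑ x, (Q x - P x) = 0 := by
      rw [Finset.sum_sub_distrib, hP1, hQ1]; ring
    have h2' : ∑ x, |Q x - P x| = 2 * ε := by
      rw [Finset.sum_congr rfl (fun x _ => abs_sub_comm (Q x) (P x)), habs]
    rw [Finset.sum_congr rfl (fun x _ => hmax (Q x - P x)), ← Finset.sum_div,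
      Finset.sum_add_distrib, h1, h2']
    ring
  rcases eq_or_lt_of_le hε0 with h0 | hεpos
  · -- ε = 0 : P = Q
    have hPQ : P = Q := by
      funext x
      have hzero : ∑ x, |P x - Q x| = 0 := by rw [habs, ← h0]; ring
      have hx := (Finset.sum_eq_zero_iff_of_nonneg
        (fun i _ => abs_nonneg (P i - Q i))).1 hzero x (Finset.mem_univ x)
      have := abs_eq_zero.1 hx
      linarith
    rw [hPQ, sub_self, ← h0]
    simp [h2]
  have hε1 : ε < 1 := by
    have : 0 < 1 / (Fintype.card X : ℝ) := by positivity
    linarith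
  have h1ε : 0 < 1 - ε := by linarith
  set m : X → ℝ := fun x => min (P x) (Q x) with hm
  set a : X → ℝ := fun x => max (P x - Q x) 0 with ha
  set b : X → ℝ := fun x => max (Q x - P x) 0 with hb
  have hm0 : ∀ x, 0 ≤ m x := fun x => le_min (hP0 x) (hQ0 x)
  have ha0 : ∀ x, 0 ≤ a x := fun x => le_max_right _ _
  have hb0 : ∀ x, 0 ≤ b x := fun x => le_max_right _ _
  have hPma : ∀ x, P x = m x + a x := by
    intro x
    rcases le_total (P x) (Q x) with h | h
    · rw [hm, ha]; simp only
      rw [min_eq_left h, max_eq_right (by linarith)]; ring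
    · rw [hm, ha]; simp only
      rw [min_eq_right h, max_eq_left (by linarith)]; ring
  have hQmb : ∀ x, Q x = m x + b x := by
    intro x
    rcases le_total (P x) (Q x) with h | h
    · rw [hm, hb]; simp only
      rw [min_eq_left h, max_eq_left (by linarith)]; ring
    · rw [hm, hb]; simp only
      rw [min_eq_right h, max_eq_right (by linarith)]; ring
  have hmsum : ∑ x, m x = 1 - ε := by
    have : ∑ x, m x = ∑ x, (P x - a x) := by
      refine Finset.sum_congr rfl fun x _ => ?_
      rw [hPma x]; ring
    rw [this, Finset.sum_sub_distrib, hP1, ha_sum]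
  set M : X → ℝ := fun x => m x / (1 - ε) with hMdef
  set P' : X → ℝ := fun x => a x / ε with hP'def
  set Q' : X → ℝ := fun x => b x / ε with hQ'def
  have hM0 : ∀ x, 0 ≤ M x := fun x => div_nonneg (hm0 x) h1ε.le
  have hP'0 : ∀ x, 0 ≤ P' x := fun x => div_nonneg (ha0 x) hε0
  have hQ'0 : ∀ x, 0 ≤ Q' x := fun x => div_nonneg (hb0 x) hε0
  have hMsum : ∑ x, M x = 1 := by
    rw [hMdef]; simp only
    rw [← Finset.sum_div, hmsum, div_self h1ε.ne']
  have hP'sum : ∑ x, P' x = 1 := by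
    rw [hP'def]; simp only
    rw [← Finset.sum_div, ha_sum, div_self hεpos.ne']
  have hQ'sum : ∑ x, Q' x = 1 := by
    rw [hQ'def]; simp only
    rw [← Finset.sum_div, hb_sum, div_self hεpos.ne']
  have hm_eq : ∀ x, m x = (1 - ε) * M x := by
    intro x; rw [hMdef]; simp only
    field_simp
  have ha_eq : ∀ x, a x = ε * P' x := by
    intro x; rw [hP'def]; simp only
    field_simp
  have hb_eq : ∀ x, b x = ε * Q' x := by
    intro x; rw [hQ'def]; simp only
    field_simp
  -- upper bound on ent P
  have hup : ent P ≤ (1 - ε) * ent M + ε * ent P'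
      + (Real.negMulLog ε + Real.negMulLog (1 - ε)) := by
    rw [ent_eq]
    calc ∑ x, Real.negMulLog (P x)
        ≤ ∑ x, (Real.negMulLog (m x) + Real.negMulLog (a x)) := by
          refine Finset.sum_le_sum fun x _ => ?_
          rw [hPma x]; exact negMulLog_add_le (hm0 x) (ha0 x)
      _ = ∑ x, Real.negMulLog ((1 - ε) * M x)
          + ∑ x, Real.negMulLog (ε * P' x) := by
          rw [← Finset.sum_add_distrib]
          refine Finset.sum_congr rfl fun x _ => ?_
          rw [← hm_eq x, ← ha_eq x]
      _ = ((∑ x, M x) * Real.negMulLog (1 - ε)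
            + (1 - ε) * ∑ x, Real.negMulLog (M x))
          + ((∑ x, P' x) * Real.negMulLog ε
            + ε * ∑ x, Real.negMulLog (P' x)) := by
          simp only [Real.negMulLog_mul, Finset.sum_add_distrib,
            ← Finset.sum_mul, ← Finset.mul_sum]
      _ = (1 - ε) * ent M + ε * ent P'
          + (Real.negMulLog ε + Real.negMulLog (1 - ε)) := by
          rw [hMsum, hP'sum, ← ent_eq M, ← ent_eq P']; ring
  -- lower bound on ent Q
  have hlow : (1 - ε) * ent M + ε * ent Q' ≤ ent Q := by
    rw [ent_eq M, ent_eq Q', ent_eq Q, Finset.mul_sum, Finset.mul_sum,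
      ← Finset.sum_add_distrib]
    refine Finset.sum_le_sum fun x _ => ?_
    have hcc := Real.concaveOn_negMulLog.2 (Set.mem_Ici.2 (hM0 x))
      (Set.mem_Ici.2 (hQ'0 x)) (by linarith : (0:ℝ) ≤ 1 - ε) hε0
      (by ring : (1 - ε) + ε = 1)
    simp only [smul_eq_mul] at hcc
    rw [← hm_eq x, ← hb_eq x, ← hQmb x] at hcc
    exact hcc
  have hQ'ent : 0 ≤ ent Q' := ent_nonneg' Q' hQ'0 hQ'sum
  -- support bound for P'
  have hentP' : ent P' ≤ Real.log ((Fintype.card X : ℝ) - 1) := by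
    set s : Finset X := Finset.univ.filter (fun x => P' x ≠ 0) with hs
    have hspos : ∀ x ∈ s, 0 < P' x := by
      intro x hx
      rw [hs, Finset.mem_filter] at hx
      exact lt_of_le_of_ne (hP'0 x) (Ne.symm hx.2)
    have hszero : ∀ x ∉ s, P' x = 0 := by
      intro x hx
      rw [hs, Finset.mem_filter] at hx
      by_contra hne
      exact hx ⟨Finset.mem_univ x, hne⟩
    have hssum : ∑ x ∈ s, P' x = 1 := by
      rw [hs, Finset.sum_filter_ne_zero, hP'sum]
    have hbase := ent_le_log_card' P' s hspos hszero hssum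
    -- exists x₀ with b x₀ ≠ 0, hence x₀ ∉ s
    have hx0 : ∃ x, b x ≠ 0 := by
      by_contra hall
      push_neg at hall
      have : ∑ x, b x = 0 := Finset.sum_eq_zero fun x _ => hall x
      rw [hb_sum] at this
      exact hεpos.ne' this
    obtain ⟨x₀, hbx₀⟩ := hx0
    have hbx₀pos : 0 < b x₀ := lt_of_le_of_ne (hb0 x₀) (Ne.symm hbx₀)
    have hQgtP : P x₀ < Q x₀ := by
      by_contra h
      push_neg at h
      have : b x₀ = 0 := by rw [hb]; simp only; rw [max_eq_right (by linarith)]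
      exact hbx₀ this
    have hax₀ : a x₀ = 0 := by
      rw [ha]; simp only; rw [max_eq_right (by linarith)]
    have hP'x₀ : P' x₀ = 0 := by
      rw [hP'def]; simp only; rw [hax₀]; simp
    have hx₀s : x₀ ∉ s := by
      rw [hs, Finset.mem_filter]
      push_neg
      intro _; exact hP'x₀
    have hsub : s ⊆ Finset.univ.erase x₀ := by
      intro x hx
      rw [Finset.mem_erase]
      exact ⟨fun h => hx₀s (h ▸ hx), Finset.mem_univ x⟩
    have hscard : s.card ≤ Fintype.card X - 1 := by
      have := Finset.card_le_card hsub
      rwa [Finset.card_erase_of_mem (Finset.mem_univ x₀), Finset.card_univ] at this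
    have hsne : s.Nonempty := by
      by_contra hemp
      rw [Finset.not_nonempty_iff_eq_empty] at hemp
      rw [hemp] at hssum
      simp at hssum
    have hscard1 : 1 ≤ s.card := Finset.Nonempty.card_pos hsne
    have hcast : (s.card : ℝ) ≤ (Fintype.card X : ℝ) - 1 := by
      have h1 : (1 : ℕ) ≤ Fintype.card X := by omega
      have := (Nat.cast_le (α := ℝ)).2 hscard
      rwa [Nat.cast_sub h1, Nat.cast_one] at this
    calc ent P' ≤ Real.log s.card := hbase
      _ ≤ Real.log ((Fintype.card X : ℝ) - 1) :=
        Real.log_le_log (by exact_mod_cast hscard1) hcast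
  have hεmul : ε * ent P' ≤ ε * Real.log ((Fintype.card X : ℝ) - 1) :=
    mul_le_mul_of_nonneg_left hentP' hε0
  have hh2 : h2 ε = Real.negMulLog ε + Real.negMulLog (1 - ε) := by
    simp only [h2, Real.negMulLog]; ring
  have hεQ' : 0 ≤ ε * ent Q' := mul_nonneg hε0 hQ'ent
  rw [hh2]
  linarith

/-- **Fannes–Audenaert inequality.** If `ε = ‖P - Q‖_TV ≤ 1 - 1/|𝒳|`
with `|𝒳| ≥ 2`, then `|H(P) - H(Q)| ≤ ε · log(|𝒳| - 1) + h₂(ε)`. -/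
theorem fannes_audenaert
    {X : Type} [Fintype X] (P Q : X → ℝ) (hP : IsPMF P) (hQ : IsPMF Q)
    (hX : 2 ≤ Fintype.card X)
    (hε : tv P Q ≤ 1 - 1 / (Fintype.card X : ℝ)) :
    |ent P - ent Q|
      ≤ tv P Q * Real.log ((Fintype.card X : ℝ) - 1) + h2 (tv P Q) := by
  have htv : tv Q P = tv P Q := by
    unfold tv
    congr 1
    exact Finset.sum_congr rfl fun x _ => abs_sub_comm (Q x) (P x)
  have h1 := one_side P Q hP hQ hX hε
  have h2' := one_side Q P hQ hP hX (by rwa [htv])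
  rw [htv] at h2'
  rw [abs_sub_le_iff]
  exact ⟨h1, h2'⟩
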